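/- Let Q, D be 2×2 Hermitian involutions on ℂ² with D = −σ_z and Q = cos θ·σ_z + sin θ·σ_x, and consider the N00N-type constraint ⟨ψ| D⊗D |ψ⟩ = −1 for a unit vector ψ ∈ ℂ²⊗ℂ². Then |⟨ψ| Q⊗Q + Q⊗D + D⊗Q − D⊗D |ψ⟩| ≤ 5/2. -/

import Mathlib

/-!
Since `D ⊗ D = σ_z ⊗ σ_z` has eigenvalue `-1` exactly on the span of `|01⟩` and `|10⟩`, the
constraint forces `ψ` into that span. There the CHSH operator acts as the real symmetric matrix
`[[α, β], [β, α]]` with `α = 1 + 2 cos θ - cos² θ` and `β = sin² θ`, so the expectation lies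
between its eigenvalues `α - β = 2 cos θ` and `α + β = 5/2 - 2 (cos θ - 1/2)²`.
-/

open Matrix Complex
open scoped Kronecker

theorem star_dotProduct_mulVec_of_apply_diag_eq_zero
    (M : Matrix (Fin 2 × Fin 2) (Fin 2 × Fin 2) ℂ) {ψ : Fin 2 × Fin 2 → ℂ}
    (h₀₀ : ψ (0, 0) = 0) (h₁₁ : ψ (1, 1) = 0) :
    star ψ ⬝ᵥ M *ᵥ ψ =
      star (ψ (0, 1)) * (M (0, 1) (0, 1) * ψ (0, 1) + M (0, 1) (1, 0) * ψ (1, 0)) +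
      star (ψ (1, 0)) * (M (1, 0) (0, 1) * ψ (0, 1) + M (1, 0) (1, 0) * ψ (1, 0)) := by
  simp [dotProduct, mulVec, Fintype.sum_prod_type, h₀₀, h₁₁]

theorem star_dotProduct_pauliZ_kronecker_pauliZ_mulVec (ψ : Fin 2 × Fin 2 → ℂ) :
    star ψ ⬝ᵥ (!![1, 0; 0, -1] ⊗ₖ !![1, 0; 0, -1] : Matrix _ _ ℂ) *ᵥ ψ =
      ((‖ψ (0, 0)‖ ^ 2 - ‖ψ (0, 1)‖ ^ 2 - ‖ψ (1, 0)‖ ^ 2 + ‖ψ (1, 1)‖ ^ 2 : ℝ) : ℂ) := by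
  simp [dotProduct, mulVec, Fintype.sum_prod_type, conj_mul']
  ring

theorem apply_eq_zero_of_star_dotProduct_pauliZ_kronecker_pauliZ_mulVec_eq_neg_one
    {ψ : Fin 2 × Fin 2 → ℂ} (hψ : ∑ i, ‖ψ i‖ ^ 2 = 1)
    (h : star ψ ⬝ᵥ (!![1, 0; 0, -1] ⊗ₖ !![1, 0; 0, -1] : Matrix _ _ ℂ) *ᵥ ψ = -1) :
    ψ (0, 0) = 0 ∧ ψ (1, 1) = 0 := by
  rw [star_dotProduct_pauliZ_kronecker_pauliZ_mulVec, ← ofReal_one, ← ofReal_neg,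
    ofReal_inj] at h
  simp only [Fintype.sum_prod_type, Fin.sum_univ_two] at hψ
  have h₀₀ : ‖ψ (0, 0)‖ ^ 2 = 0 := by nlinarith [sq_nonneg ‖ψ (1, 1)‖]
  have h₁₁ : ‖ψ (1, 1)‖ ^ 2 = 0 := by nlinarith [sq_nonneg ‖ψ (0, 0)‖]
  simpa using And.intro h₀₀ h₁₁

theorem norm_star_mul_add_star_mul_le {α β r : ℝ} {b c : ℂ} (hbc : ‖b‖ ^ 2 + ‖c‖ ^ 2 = 1)
    (hadd : |α + β| ≤ r) (hsub : |α - β| ≤ r) :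
    ‖star b * (α * b + β * c) + star c * (β * b + α * c)‖ ≤ r := by
  set t := 2 * (star b * c).re
  have ht : |t| ≤ 1 := by
    have := abs_re_le_norm (star b * c)
    rw [norm_mul, norm_star] at this
    rw [abs_le] at this ⊢
    constructor <;> nlinarith [sq_nonneg (‖b‖ - ‖c‖), sq_nonneg (‖b‖ + ‖c‖)]
  have hcross : star b * c + star c * b = t := by
    rw [← add_conj, star_def, map_mul, conj_conj, mul_comm b]
  have hq : star b * (α * b + β * c) + star c * (β * b + α * c)
      = (((1 + t) / 2 * (α + β) + (1 - t) / 2 * (α - β) : ℝ) : ℂ) := by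
    have hbc' : (‖b‖ : ℂ) ^ 2 + (‖c‖ : ℂ) ^ 2 = 1 := by exact_mod_cast hbc
    push_cast
    rw [star_def] at hcross ⊢
    linear_combination α * conj_mul' b + α * conj_mul' c + β * hcross + α * hbc'
  rw [hq, norm_real, Real.norm_eq_abs]
  rw [abs_le] at *
  constructor <;> nlinarith

theorem abs_two_add_two_mul_sub_two_mul_sq_le {x : ℝ} (hx : |x| ≤ 1) :
    |2 + 2 * x - 2 * x ^ 2| ≤ 5 / 2 := by
  rw [abs_le] at *
  constructor <;> nlinarith [sq_nonneg (2 * x - 1)]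

theorem neg_kronecker_neg {R m n : Type*} [CommRing R] (A : Matrix m m R) (B : Matrix n n R) :
    (-A) ⊗ₖ (-B) = A ⊗ₖ B := by
  ext; simp

/-- For the 2×2 Hermitian involutions `Q = cos θ·σ_z + sin θ·σ_x`, `D = −σ_z` and a unit
vector `ψ ∈ ℂ²⊗ℂ²` satisfying the N00N-type constraint `⟨ψ| D⊗D |ψ⟩ = −1`, the CHSH
expectation satisfies `|⟨ψ| Q⊗Q + Q⊗D + D⊗Q − D⊗D |ψ⟩| ≤ 5/2`. -/
theorem chsh_bound_noon (θ : ℝ)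
    (σx σz Q D : Matrix (Fin 2) (Fin 2) ℂ)
    (hσx : σx = !![0, 1; 1, 0]) (hσz : σz = !![1, 0; 0, -1])
    (hQ : Q = (Real.cos θ : ℂ) • σz + (Real.sin θ : ℂ) • σx)
    (hD : D = -σz)
    (ψ : Fin 2 × Fin 2 → ℂ) (hψ : ∑ i, ‖ψ i‖ ^ 2 = 1)
    (hcorr : star ψ ⬝ᵥ (D ⊗ₖ D).mulVec ψ = -1) :
    ‖star ψ ⬝ᵥ (Q ⊗ₖ Q + Q ⊗ₖ D + D ⊗ₖ Q - D ⊗ₖ D).mulVec ψ‖ ≤ 5 / 2 := by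
  subst hσx hσz hQ hD
  rw [neg_kronecker_neg] at hcorr ⊢
  obtain ⟨h₀₀, h₁₁⟩ :=
    apply_eq_zero_of_star_dotProduct_pauliZ_kronecker_pauliZ_mulVec_eq_neg_one hψ hcorr
  have hnorm : ‖ψ (0, 1)‖ ^ 2 + ‖ψ (1, 0)‖ ^ 2 = 1 := by
    simpa [Fintype.sum_prod_type, h₀₀, h₁₁] using hψ
  rw [star_dotProduct_mulVec_of_apply_diag_eq_zero _ h₀₀ h₁₁]
  have hcos := Real.abs_cos_le_one θ
  have hsin := Real.sin_sq θ
  convert norm_star_mul_add_star_mul_le (α := 1 + 2 * Real.cos θ - Real.cos θ ^ 2)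
    (β := Real.sin θ ^ 2) hnorm ?_ ?_ using 4
  case convert_2 =>
    rw [hsin]
    convert abs_two_add_two_mul_sub_two_mul_sq_le hcos using 2
    ring
  case convert_3 =>
    rw [hsin]
    rw [abs_le] at hcos ⊢
    constructor <;> linarith
  all_goals simp; ring
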